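/- Let φ : ℝ^n → ℂ^N be a smooth solution of the stationary nonlinear Dirac equation ℒ₋φ = 0. Then for each 1 ≤ k ≤ n one has ℒ(α_k φ) = -2i ∂_k φ - 2ω α_k φ, and consequently ℒ(α_k φ + 2ωi x_k φ) = -2i ∂_k φ. -/

import Mathlib

open MeasureTheory

/-- Partial derivative of `f` in the `j`-th coordinate direction. -/
noncomputable def pderiv' {n : ℕ} {E : Type*} [NormedAddCommGroup E] [NormedSpace ℝ E]
    (j : Fin n) (f : (Fin n → ℝ) → E) (x : Fin n → ℝ) : E :=
  fderiv ℝ f x (Pi.single j 1)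

/-- `φ*βφ`, the (real) scalar density of the Soler model. -/
noncomputable def solerDensity {n N : ℕ} (β : Matrix (Fin N) (Fin N) ℂ)
    (φ : (Fin n → ℝ) → Fin N → ℂ) (x : Fin n → ℝ) : ℝ :=
  (dotProduct (star (φ x)) (β.mulVec (φ x))).re

/-- The operator `ℒ₋ψ = -i∑_j α_j ∂_jψ - ωψ + g(φ*βφ)βψ`. -/
noncomputable def diracLminus {n N : ℕ}
    (α : Fin n → Matrix (Fin N) (Fin N) ℂ) (β : Matrix (Fin N) (Fin N) ℂ)
    (g : ℝ → ℝ) (ω : ℝ)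
    (φ ψ : (Fin n → ℝ) → Fin N → ℂ) (x : Fin n → ℝ) : Fin N → ℂ :=
  (-Complex.I) • (∑ j : Fin n, (α j).mulVec (pderiv' j ψ x))
    - (ω : ℂ) • ψ x
    + (g (solerDensity β φ x) : ℂ) • β.mulVec (ψ x)

/-- The linearization `ℒψ = ℒ₋ψ + 2g'(φ*βφ) Re(φ*βψ) βφ`. -/
noncomputable def diracL {n N : ℕ}
    (α : Fin n → Matrix (Fin N) (Fin N) ℂ) (β : Matrix (Fin N) (Fin N) ℂ)
    (g : ℝ → ℝ) (ω : ℝ)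
    (φ ψ : (Fin n → ℝ) → Fin N → ℂ) (x : Fin n → ℝ) : Fin N → ℂ :=
  diracLminus α β g ω φ ψ x
    + ((2 * deriv g (solerDensity β φ x)
        * (dotProduct (star (φ x)) (β.mulVec (ψ x))).re : ℝ) : ℂ)
      • β.mulVec (φ x)

/- ### Auxiliary lemmas -/

noncomputable def mulVecCLM {N : ℕ} (M : Matrix (Fin N) (Fin N) ℂ) :
    (Fin N → ℂ) →L[ℝ] (Fin N → ℂ) :=
  LinearMap.toContinuousLinearMap ((Matrix.mulVecLin M).restrictScalars ℝ)

@[simp] lemma mulVecCLM_apply {N : ℕ} (M : Matrix (Fin N) (Fin N) ℂ) (v : Fin N → ℂ) :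
    mulVecCLM M v = M.mulVec v := rfl

lemma pderiv'_mulVec {n N : ℕ} (M : Matrix (Fin N) (Fin N) ℂ)
    (φ : (Fin n → ℝ) → Fin N → ℂ) (x : Fin n → ℝ) (hφ : DifferentiableAt ℝ φ x)
    (j : Fin n) :
    pderiv' j (fun y => M.mulVec (φ y)) x = M.mulVec (pderiv' j φ x) := by
  have h := ((mulVecCLM M).hasFDerivAt.comp x hφ.hasFDerivAt)
  have heq : (fun y => M.mulVec (φ y)) = (mulVecCLM M) ∘ φ := rfl
  rw [pderiv', heq, h.fderiv]
  rfl

noncomputable def coordCLM {n : ℕ} (c : ℂ) (k : Fin n) : (Fin n → ℝ) →L[ℝ] ℂ :=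
  c • (Complex.ofRealCLM.comp (ContinuousLinearMap.proj k))

lemma hasFDerivAt_coord {n : ℕ} (c : ℂ) (k : Fin n) (x : Fin n → ℝ) :
    HasFDerivAt (fun y : Fin n → ℝ => c * ((y k : ℝ) : ℂ)) (coordCLM c k) x := by
  have h := (coordCLM c k).hasFDerivAt (x := x)
  convert h using 2
  simp [coordCLM]

lemma pderiv'_mulVec_add_scalar {n N : ℕ} (M : Matrix (Fin N) (Fin N) ℂ) (c : ℂ) (k : Fin n)
    (φ : (Fin n → ℝ) → Fin N → ℂ) (x : Fin n → ℝ) (hφ : DifferentiableAt ℝ φ x)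
    (j : Fin n) :
    pderiv' j (fun y => M.mulVec (φ y) + (c * ((y k : ℝ) : ℂ)) • φ y) x
      = M.mulVec (pderiv' j φ x) + (c * (x k : ℂ)) • pderiv' j φ x
        + (if j = k then c else 0) • φ x := by
  have h1 : HasFDerivAt (fun y => M.mulVec (φ y)) ((mulVecCLM M).comp (fderiv ℝ φ x)) x :=
    (mulVecCLM M).hasFDerivAt.comp x hφ.hasFDerivAt
  have h2 := (hasFDerivAt_coord c k x).smul hφ.hasFDerivAt
  have h := h1.add h2
  rw [pderiv', show (fun y => M.mulVec (φ y) + (c * ((y k : ℝ) : ℂ)) • φ y)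
    = ((fun y => M.mulVec (φ y)) + (fun y : Fin n → ℝ => c * ((y k : ℝ) : ℂ)) • φ) from rfl, h.fderiv]
  simp only [ContinuousLinearMap.add_apply, ContinuousLinearMap.coe_comp', Function.comp_apply,
    ContinuousLinearMap.smul_apply, ContinuousLinearMap.smulRight_apply, mulVecCLM_apply,
    coordCLM, ContinuousLinearMap.coe_smul', Pi.smul_apply, Complex.ofRealCLM_apply,
    ContinuousLinearMap.proj_apply, Pi.single_apply, pderiv']
  rcases eq_or_ne k j with h' | h' <;> simp [h', eq_comm, smul_smul, add_assoc]

lemma mulVec_sum' {N n : ℕ} (A : Matrix (Fin N) (Fin N) ℂ) (v : Fin n → Fin N → ℂ) :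
    A.mulVec (∑ j, v j) = ∑ j, A.mulVec (v j) := by
  simp only [← Matrix.mulVecLin_apply]
  exact map_sum (Matrix.mulVecLin A) v Finset.univ

lemma quad_conj {N : ℕ} (M : Matrix (Fin N) (Fin N) ℂ) (v : Fin N → ℂ) :
    (starRingEnd ℂ) (dotProduct (star v) (M.mulVec v))
      = dotProduct (star v) (M.conjTranspose.mulVec v) := by
  have h1 : (starRingEnd ℂ) (dotProduct (star v) (M.mulVec v))
      = dotProduct (star (M.mulVec v)) v := by
    simp [dotProduct, Finset.mul_sum, map_sum, mul_comm]
  rw [h1, Matrix.star_mulVec, ← Matrix.dotProduct_mulVec]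

lemma quad_re_zero {N : ℕ} (M : Matrix (Fin N) (Fin N) ℂ) (v : Fin N → ℂ)
    (hM : M.conjTranspose = -M) :
    (dotProduct (star v) (M.mulVec v)).re = 0 := by
  have h := quad_conj M v
  rw [hM] at h
  simp [Matrix.neg_mulVec] at h
  have h2 := congrArg Complex.re h
  simp [Complex.conj_re] at h2
  linarith

lemma quad_im_zero {N : ℕ} (M : Matrix (Fin N) (Fin N) ℂ) (v : Fin N → ℂ)
    (hM : M.conjTranspose = M) :
    (dotProduct (star v) (M.mulVec v)).im = 0 := by
  have h := quad_conj M v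
  rw [hM] at h
  have h2 := congrArg Complex.im h
  simp [Complex.conj_im] at h2
  linarith

/-- if `φ` is a smooth solution of `ℒ₋φ = 0`, then
`ℒ(α_k φ) = -2i∂_kφ - 2ωα_kφ` and consequently
`ℒ(α_kφ + 2ωi x_k φ) = -2i∂_kφ`. -/
theorem stmt_16 (n N : ℕ) (hn : 1 ≤ n) (hN : 1 ≤ N)
    (α : Fin n → Matrix (Fin N) (Fin N) ℂ) (β : Matrix (Fin N) (Fin N) ℂ)
    (hαherm : ∀ j, (α j).IsHermitian) (hβherm : β.IsHermitian)
    (hαα : ∀ j k, α j * α k + α k * α j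
      = if j = k then (2 : ℂ) • (1 : Matrix (Fin N) (Fin N) ℂ) else 0)
    (hαβ : ∀ j, α j * β + β * α j = 0)
    (hβ2 : β * β = 1)
    (g : ℝ → ℝ) (hg : ContDiff ℝ (⊤ : ℕ∞) g) (ω : ℝ)
    (φ : (Fin n → ℝ) → Fin N → ℂ) (hφsmooth : ContDiff ℝ (⊤ : ℕ∞) φ)
    (hsol : ∀ x, diracLminus α β g ω φ φ x = 0) :
    ∀ k : Fin n,
      (∀ x, diracL α β g ω φ (fun y => (α k).mulVec (φ y)) x
          = (-2 * Complex.I) • pderiv' k φ x - ((2 * ω : ℝ) : ℂ) • (α k).mulVec (φ x))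
      ∧ (∀ x, diracL α β g ω φ
            (fun y => (α k).mulVec (φ y) + ((2 * ω : ℝ) * Complex.I * (y k : ℂ)) • φ y) x
          = (-2 * Complex.I) • pderiv' k φ x) := by
  have hφd : ∀ x, DifferentiableAt ℝ φ x := fun x =>
    (hφsmooth.differentiable (by simp)).differentiableAt
  intro k
  have hαkβ : β * α k = -(α k * β) := eq_neg_of_add_eq_zero_right (hαβ k)
  have hβαk : (β * α k).conjTranspose = -(β * α k) := by
    rw [Matrix.conjTranspose_mul, (hαherm k).eq, hβherm.eq, hαkβ, neg_neg]
  -- common facts at each point x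
  have hfacts : ∀ x : Fin n → ℝ,
      (g (solerDensity β φ x) : ℂ) • β.mulVec (φ x)
        = Complex.I • (∑ j, (α j).mulVec (pderiv' j φ x)) + (ω : ℂ) • φ x := by
    intro x
    have hsolx := hsol x
    simp only [diracLminus] at hsolx
    have h2 : (g (solerDensity β φ x) : ℂ) • β.mulVec (φ x)
        = ((-Complex.I) • (∑ j, (α j).mulVec (pderiv' j φ x)) - (ω : ℂ) • φ x
            + (g (solerDensity β φ x) : ℂ) • β.mulVec (φ x))
          + (Complex.I • (∑ j, (α j).mulVec (pderiv' j φ x)) + (ω : ℂ) • φ x) := by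
      module
    rw [h2, hsolx]
    module
  have hA : ∀ x : Fin n → ℝ,
      (g (solerDensity β φ x) : ℂ) • β.mulVec ((α k).mulVec (φ x))
        = -(Complex.I • (α k).mulVec (∑ j, (α j).mulVec (pderiv' j φ x)))
          - (ω : ℂ) • (α k).mulVec (φ x) := by
    intro x
    have h1 : β.mulVec ((α k).mulVec (φ x)) = -((α k).mulVec (β.mulVec (φ x))) := by
      rw [Matrix.mulVec_mulVec, Matrix.mulVec_mulVec, hαkβ, Matrix.neg_mulVec]
    rw [h1, smul_neg, ← Matrix.mulVec_smul, hfacts x, Matrix.mulVec_add, Matrix.mulVec_smul,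
      Matrix.mulVec_smul]
    module
  have hSum : ∀ x : Fin n → ℝ,
      ∑ j, (α j).mulVec ((α k).mulVec (pderiv' j φ x))
        = (2 : ℂ) • pderiv' k φ x
          - (α k).mulVec (∑ j, (α j).mulVec (pderiv' j φ x)) := by
    intro x
    have hterm : ∀ j, (α j).mulVec ((α k).mulVec (pderiv' j φ x))
        = (if j = k then (2 : ℂ) • pderiv' j φ x else 0)
          - (α k).mulVec ((α j).mulVec (pderiv' j φ x)) := by
      intro j
      have hjk : α j * α k
          = (if j = k then (2 : ℂ) • (1 : Matrix (Fin N) (Fin N) ℂ) else 0) - α k * α j :=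
        eq_sub_of_add_eq (hαα j k)
      rw [Matrix.mulVec_mulVec, hjk, Matrix.sub_mulVec, ← Matrix.mulVec_mulVec]
      congr 1
      split <;> simp [Matrix.smul_mulVec]
    rw [Finset.sum_congr rfl fun j _ => hterm j, Finset.sum_sub_distrib, mulVec_sum']
    congr 1
    simp
  have hReQ : ∀ x : Fin n → ℝ,
      (dotProduct (star (φ x)) (β.mulVec ((α k).mulVec (φ x)))).re = 0 := by
    intro x
    rw [Matrix.mulVec_mulVec]
    exact quad_re_zero _ _ hβαk
  have hImQ : ∀ x : Fin n → ℝ,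
      (dotProduct (star (φ x)) (β.mulVec (φ x))).im = 0 := fun x =>
    quad_im_zero _ _ hβherm.eq
  constructor
  · intro x
    simp only [diracL, diracLminus, pderiv'_mulVec (α k) φ x (hφd x)]
    rw [hReQ x]
    simp only [mul_zero, Complex.ofReal_zero, zero_smul, add_zero]
    rw [hSum x, hA x]
    push_cast
    module
  · intro x
    set c : ℂ := ((2 * ω : ℝ) : ℂ) * Complex.I with hc
    have hp : ∀ j, pderiv' j
        (fun y => (α k).mulVec (φ y) + (c * ((y k : ℝ) : ℂ)) • φ y) x
        = (α k).mulVec (pderiv' j φ x) + (c * (x k : ℂ)) • pderiv' j φ x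
          + (if j = k then c else 0) • φ x :=
      pderiv'_mulVec_add_scalar (α k) c k φ x (hφd x)
    simp only [diracL, diracLminus, hp]
    -- split the sum
    rw [show (∑ j, (α j).mulVec ((α k).mulVec (pderiv' j φ x)
          + (c * (x k : ℂ)) • pderiv' j φ x + (if j = k then c else 0) • φ x))
        = (∑ j, (α j).mulVec ((α k).mulVec (pderiv' j φ x)))
          + (c * (x k : ℂ)) • (∑ j, (α j).mulVec (pderiv' j φ x))
          + c • (α k).mulVec (φ x) from by
      rw [Finset.sum_congr rfl fun j _ => by
        rw [Matrix.mulVec_add, Matrix.mulVec_add, Matrix.mulVec_smul, Matrix.mulVec_smul]]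
      rw [Finset.sum_add_distrib, Finset.sum_add_distrib, ← Finset.smul_sum]
      congr 1
      simp [ite_smul]]
    -- the value of ψ at x and β ψ x
    rw [show β.mulVec ((α k).mulVec (φ x) + (c * (x k : ℂ)) • φ x)
        = β.mulVec ((α k).mulVec (φ x)) + (c * (x k : ℂ)) • β.mulVec (φ x) from by
      rw [Matrix.mulVec_add, Matrix.mulVec_smul]]
    -- the Re coefficient vanishes
    rw [show (dotProduct (star (φ x)) (β.mulVec ((α k).mulVec (φ x))
          + (c * (x k : ℂ)) • β.mulVec (φ x))).re = 0 from by
      rw [dotProduct_add, dotProduct_smul, smul_eq_mul, Complex.add_re,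
        hReQ x, Complex.mul_re, hImQ x]
      simp [hc]]
    simp only [mul_zero, Complex.ofReal_zero, zero_smul, add_zero]
    rw [hSum x]
    rw [show ((g (solerDensity β φ x) : ℝ) : ℂ) • (β.mulVec ((α k).mulVec (φ x))
          + (c * (x k : ℂ)) • β.mulVec (φ x))
        = (-(Complex.I • (α k).mulVec (∑ j, (α j).mulVec (pderiv' j φ x)))
            - (ω : ℂ) • (α k).mulVec (φ x))
          + (c * (x k : ℂ)) • (Complex.I • (∑ j, (α j).mulVec (pderiv' j φ x))
            + (ω : ℂ) • φ x) from by
      rw [smul_add, hA x, smul_comm ((g (solerDensity β φ x) : ℝ) : ℂ) (c * (x k : ℂ)),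
        hfacts x]]
    match_scalars <;> (push_cast; ring_nf) <;> simp [hc, Complex.I_sq] <;> ring_nf <;> simp [Complex.I_sq]
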